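/- For every finite tree T with V vertices and every integer k with 0 ≤ k ≤ V, the 'zero level' Seifert cohomology is one-dimensional: dim SH^k(T,k) = 1; and SH^k(T,k) = 0 for k outside [0,V]. -/

import Mathlib

open Polynomial Matrix

attribute [local instance] Classical.propDecidable

namespace Seifert

variable {V : Type} [Fintype V]

/-- A matching of a graph `G`: a finite set of edges of `G` that are pairwise disjoint. -/
def IsMatching (G : SimpleGraph V) (R : Finset (Sym2 V)) : Prop :=
  (∀ e ∈ R, e ∈ G.edgeSet) ∧
    ∀ e ∈ R, ∀ f ∈ R, e ≠ f → ∀ v : V, v ∈ e → v ∉ f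

/-- A perfect matching: a matching covering every vertex. -/
def IsPerfectMatching (G : SimpleGraph V) (R : Finset (Sym2 V)) : Prop :=
  IsMatching G R ∧ ∀ v : V, ∃ e ∈ R, v ∈ e

/-- A configuration on `G`: a matching (the set of red edges) together with an assignment
of a sign (`true` = plus, `false` = minus) to every vertex not covered by a red edge;
vertices covered by a red edge get `none`. -/
structure Config (G : SimpleGraph V) where
  red : Finset (Sym2 V)
  matching : IsMatching G red
  sign : V → Option Bool
  sign_none : ∀ v : V, sign v = none ↔ ∃ e ∈ red, v ∈ e

instance (G : SimpleGraph V) : Finite (Config G) :=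
  Finite.of_injective (fun C => (C.red, C.sign)) (by
    rintro ⟨r, hr, s, hs⟩ ⟨r', hr', s', hs'⟩ h
    simp only [Prod.mk.injEq] at h
    obtain ⟨h1, h2⟩ := h
    subst h1; subst h2; rfl)

noncomputable instance (G : SimpleGraph V) : Fintype (Config G) := Fintype.ofFinite _

/-- The grading `Q`: the number of minuses. -/
noncomputable def Qg {G : SimpleGraph V} (C : Config G) : ℕ :=
  (Finset.univ.filter fun v : V => C.sign v = some false).card

/-- The grading `E`: the number of minuses plus the number of red edges. -/
noncomputable def Eg {G : SimpleGraph V} (C : Config G) : ℕ := Qg C + C.red.card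

/-- `DStep C C'` holds iff `C'` is one of the summands of `D(C)`: it is obtained from `C`
by deleting one red edge `e` and assigning a plus to one endpoint of `e` and a minus to
the other. -/
def DStep {G : SimpleGraph V} (C C' : Config G) : Prop :=
  ∃ e ∈ C.red, C'.red = C.red.erase e ∧
    (∀ x : V, x ∉ e → C'.sign x = C.sign x) ∧
    ∃ u v : V, e = s(u, v) ∧ C'.sign u = some true ∧ C'.sign v = some false

/-- `dStep C C'` holds iff `C'` is one of the summands of `d(C)`: it is obtained from `C`
by changing the sign of one vertex from plus to minus. -/
def dStep {G : SimpleGraph V} (C C' : Config G) : Prop :=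
  C'.red = C.red ∧ ∃ w : V, C.sign w = some true ∧ C'.sign w = some false ∧
    ∀ x : V, x ≠ w → C'.sign x = C.sign x

/-- The linear map on spaces of `F₂`-valued functions induced by a relation `r`:
the basis vector of `a` is sent to the sum of the basis vectors of all `b` with `r a b`. -/
noncomputable def sumLin {α β : Type} [Fintype α] (r : α → β → Prop) :
    (α → ZMod 2) →ₗ[ZMod 2] (β → ZMod 2) where
  toFun f b := ∑ a : α, if r a b then f a else 0
  map_add' f g := by
    funext b
    simp only [Pi.add_apply]
    rw [← Finset.sum_add_distrib]
    exact Finset.sum_congr rfl fun a _ => by by_cases h : r a b <;> simp [h]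
  map_smul' c f := by
    funext b
    simp only [RingHom.id_apply, Pi.smul_apply, smul_eq_mul, Finset.mul_sum]
    exact Finset.sum_congr rfl fun a _ => by by_cases h : r a b <;> simp [h]

/-- The differential `D` on the total Seifert complex `SC(T)`. -/
noncomputable def Dmap (G : SimpleGraph V) :
    (Config G → ZMod 2) →ₗ[ZMod 2] (Config G → ZMod 2) :=
  sumLin DStep

/-- The differential `d` on the total Seifert complex `SC(T)`. -/
noncomputable def dmap (G : SimpleGraph V) :
    (Config G → ZMod 2) →ₗ[ZMod 2] (Config G → ZMod 2) :=
  sumLin dStep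

/-- The graded piece `SC^k(T,n)`: the `F₂`-vector space with basis the configurations
with `Q = k` and `E = n`. -/
abbrev SC (G : SimpleGraph V) (k n : ℤ) : Type :=
  {C : Config G // (Qg C : ℤ) = k ∧ (Eg C : ℤ) = n} → ZMod 2

/-- The differential `D` between graded pieces. (Mathematically it is nonzero only
from `SC^k(T,n)` to `SC^{k+1}(T,n)`.) -/
noncomputable def Dgr (G : SimpleGraph V) (k n k' n' : ℤ) :
    SC G k n →ₗ[ZMod 2] SC G k' n' :=
  sumLin fun C C' => DStep C.1 C'.1

/-- The dimension of the cohomology `ker g / im f` at the middle term of `A —f→ B —g→ C`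
(taking the image of `f` intersected with the kernel of `g`). -/
noncomputable def cohDim {A B M : Type} [AddCommGroup A] [AddCommGroup B] [AddCommGroup M]
    [Module (ZMod 2) A] [Module (ZMod 2) B] [Module (ZMod 2) M]
    (f : A →ₗ[ZMod 2] B) (g : B →ₗ[ZMod 2] M) : ℕ :=
  Module.finrank (ZMod 2)
    (LinearMap.ker g ⧸ (LinearMap.range f).comap (LinearMap.ker g).subtype)

/-- The dimension of the Seifert cohomology `SH^k(T,n)`. -/
noncomputable def SHdim (G : SimpleGraph V) (k n : ℤ) : ℕ :=
  cohDim (Dgr G (k - 1) n k n) (Dgr G k n (k + 1) n)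

/-- The Seifert matrix of a graph with respect to an enumeration of its vertices. -/
noncomputable def seifertMatrix (G : SimpleGraph V) {m : ℕ} (e : V ≃ Fin m) :
    Matrix (Fin m) (Fin m) ℤ := fun i j =>
  if i = j then -1 else if i < j ∧ G.Adj (e.symm i) (e.symm j) then 1 else 0

/-- The Alexander polynomial `det (t S - Sᵀ)` of a graph with respect to an enumeration
of its vertices. -/
noncomputable def alexDet (G : SimpleGraph V) {m : ℕ} (e : V ≃ Fin m) : Polynomial ℤ :=
  let S : Matrix (Fin m) (Fin m) (Polynomial ℤ) :=
    (seifertMatrix G e).map fun a => (Polynomial.C a : Polynomial ℤ)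
  ((X : Polynomial ℤ) • S - Sᵀ).det

/-- The Alexander polynomial of a graph (or forest), defined as the matching polynomial
`Σ_R t^{|R|} (1-t)^{V - 2|R|}`, the sum being over all matchings `R`. -/
noncomputable def alexMatch (G : SimpleGraph V) : Polynomial ℤ :=
  ∑ R : {R : Finset (Sym2 V) // IsMatching G R},
    X ^ R.1.card * (1 - X) ^ (Fintype.card V - 2 * R.1.card)

end Seifert

/-!
In bidegree `(k, k)` there are no red edges, so `SC^k(T,k)` has a basis indexed by the
`k`-element sets of minus vertices, and `D` vanishes on it. A configuration of bidegree
`(k - 1, k)` has a single red edge `uv`, and `D` sends it to the sum of the two configurations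
obtained by putting the new minus on `u` or on `v`. Hence the image of `D` is spanned by the
sums `s + t` where `t` arises from `s` by sliding one minus along an edge. In a connected graph
any `k`-set can be slid to any other, so the image is exactly the kernel of the coordinate sum,
a hyperplane as soon as some `k`-set exists, that is, for `0 ≤ k ≤ V`.
-/

namespace Seifert

section LinearAlgebra

variable {A B M : Type} [AddCommGroup A] [AddCommGroup B] [AddCommGroup M]
  [Module (ZMod 2) A] [Module (ZMod 2) B] [Module (ZMod 2) M]

theorem cohDim_eq_zero_of_subsingleton [Subsingleton B] (f : A →ₗ[ZMod 2] B)
    (g : B →ₗ[ZMod 2] M) : cohDim f g = 0 :=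
  Module.finrank_zero_of_subsingleton

theorem cohDim_eq_one {f : A →ₗ[ZMod 2] B} {g : B →ₗ[ZMod 2] M} (φ : B →ₗ[ZMod 2] ZMod 2)
    (hφ : ∃ b ∈ LinearMap.ker g, φ b ≠ 0)
    (hrange : ∀ b ∈ LinearMap.ker g, b ∈ LinearMap.range f ↔ φ b = 0) :
    cohDim f g = 1 := by
  set Φ := φ ∘ₗ (LinearMap.ker g).subtype
  have hΦ : Function.Surjective Φ := by
    obtain ⟨b, hb, hφb⟩ := hφ
    exact Φ.surjective_or_eq_zero.resolve_right fun h => hφb (LinearMap.congr_fun h ⟨b, hb⟩)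
  have hker : LinearMap.ker Φ = (LinearMap.range f).comap (LinearMap.ker g).subtype := by
    ext ⟨b, hb⟩
    exact (hrange b hb).symm
  rw [cohDim, ← hker, (Φ.quotKerEquivOfSurjective hΦ).finrank_eq, Module.finrank_self]

theorem sub_mem_of_reflTransGen {α R N : Type*} [Ring R] [AddCommGroup N] [Module R N]
    {r : α → α → Prop} (W : Submodule R N) (v : α → N) (hr : ∀ a b, r a b → v a - v b ∈ W)
    {a b : α} (h : Relation.ReflTransGen r a b) : v a - v b ∈ W := by
  induction h with
  | refl => simp
  | tail _ hbc ih => simpa using W.add_mem ih (hr _ _ hbc)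

theorem mem_of_sum_eq_zero {ι R : Type*} [Fintype ι] [DecidableEq ι] [CommRing R]
    {W : Submodule R (ι → R)} (hW : ∀ a b, Pi.single a 1 - Pi.single b 1 ∈ W)
    {x : ι → R} (hx : ∑ i, x i = 0) : x ∈ W := by
  cases isEmpty_or_nonempty ι
  · simp [Subsingleton.elim x 0]
  obtain ⟨b⟩ := ‹Nonempty ι›
  have hxsum : x = ∑ a, x a • (Pi.single a 1 - Pi.single b 1) := by
    simp_rw [smul_sub, Finset.sum_sub_distrib, ← Finset.sum_smul, hx, zero_smul, sub_zero]
    exact pi_eq_sum_univ' x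
  rw [hxsum]
  exact sum_mem fun a _ => W.smul_mem _ (hW a b)

noncomputable def coordSum (ι : Type*) [Fintype ι] : (ι → ZMod 2) →ₗ[ZMod 2] ZMod 2 :=
  ∑ i, LinearMap.proj i

theorem coordSum_apply {ι : Type*} [Fintype ι] (x : ι → ZMod 2) : coordSum ι x = ∑ i, x i := by
  simp [coordSum]

theorem sumLin_single {α β : Type} [Fintype α] [DecidableEq α] (r : α → β → Prop) (a : α)
    (c : ZMod 2) (b : β) : sumLin r (Pi.single a c) b = if r a b then c else 0 := by
  simp only [sumLin, LinearMap.coe_mk, AddHom.coe_mk]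
  rw [Finset.sum_eq_single a] <;> simp +contextual

end LinearAlgebra

variable {V : Type} {G : SimpleGraph V}

def Move (G : SimpleGraph V) (s t : Finset V) : Prop :=
  ∃ u v, G.Adj u v ∧ u ∈ s ∧ v ∉ s ∧ t = insert v (s.erase u)

theorem card_insert_erase {s : Finset V} {u v : V} (hu : u ∈ s) (hv : v ∉ s) :
    (insert v (s.erase u)).card = s.card := by
  rw [Finset.card_insert_of_notMem (fun h => hv (Finset.mem_of_mem_erase h)),
    Finset.card_erase_add_one hu]

theorem Move.card_eq {s t : Finset V} (h : Move G s t) : t.card = s.card := by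
  obtain ⟨u, v, -, hu, hv, rfl⟩ := h
  exact card_insert_erase hu hv

theorem reflTransGen_move_of_walk {a b : V} (p : G.Walk b a) :
    ∀ s : Finset V, a ∈ s → b ∉ s → Relation.ReflTransGen (Move G) s (insert b (s.erase a)) := by
  induction p with
  | nil => exact fun s ha hb => absurd ha hb
  | @cons b c a hbc q ih =>
    intro s ha hb
    -- If `c` is occupied, its token moves to `b` and `c` becomes the new empty end of the walk;
    -- otherwise the token on `a` is first slid to `c` and then moved on to `b`.
    by_cases hc : c ∈ s
    · by_cases hca : c = a
      · subst hca
        exact .single ⟨c, b, hbc.symm, hc, hb, rfl⟩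
      · have hrec := ih (insert b (s.erase c))
          (Finset.mem_insert_of_mem (Finset.mem_erase.2 ⟨Ne.symm hca, ha⟩)) (by simp [hbc.ne'])
        have hab : a ≠ b := fun h => hb (h ▸ ha)
        rw [Finset.erase_insert_of_ne hab.symm, Finset.erase_right_comm, Finset.insert_comm,
          Finset.insert_erase (Finset.mem_erase.2 ⟨hca, hc⟩)] at hrec
        exact .head ⟨c, b, hbc.symm, hc, hb, rfl⟩ hrec
    · refine (ih s ha hc).tail ⟨c, b, hbc.symm, Finset.mem_insert_self _ _, ?_, ?_⟩
      · simp [hbc.ne, hb]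
      · rw [Finset.erase_insert (by simp [hc])]

theorem reflTransGen_move_of_card_eq (hG : G.Preconnected) {s t : Finset V}
    (h : s.card = t.card) : Relation.ReflTransGen (Move G) s t := by
  obtain ⟨n, hn⟩ : ∃ n, (s \ t).card = n := ⟨_, rfl⟩
  induction n generalizing s with
  | zero =>
    rw [Finset.card_eq_zero, Finset.sdiff_eq_empty_iff_subset] at hn
    rw [Finset.eq_of_subset_of_card_le hn h.ge]
  | succ n ih =>
    obtain ⟨a, ha⟩ := Finset.card_pos.1 (hn.trans_gt n.succ_pos)
    obtain ⟨b, hb⟩ := Finset.card_pos.1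
      ((Finset.card_sdiff_comm h ▸ hn).trans_gt n.succ_pos)
    obtain ⟨has, hat⟩ := Finset.mem_sdiff.1 ha
    obtain ⟨hbt, hbs⟩ := Finset.mem_sdiff.1 hb
    refine (reflTransGen_move_of_walk (hG b a).some s has hbs).trans (ih ?_ ?_)
    · rw [card_insert_erase has hbs, h]
    · rw [Finset.insert_sdiff_of_mem _ hbt, Finset.erase_sdiff_comm, Finset.card_erase_of_mem ha,
        hn, Nat.add_sub_cancel]

theorem Config.ext {C C' : Config G} (hred : C.red = C'.red) (hsign : C.sign = C'.sign) :
    C = C' := by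
  cases C; cases C'; simp_all

theorem Config.sign_eq_none {C : Config G} {e : Sym2 V} (he : e ∈ C.red) {v : V} (hv : v ∈ e) :
    C.sign v = none :=
  (C.sign_none v).2 ⟨e, he, hv⟩

noncomputable def Config.ofMinus (R : Finset (Sym2 V)) (hR : IsMatching G R) (s : Finset V) :
    Config G where
  red := R
  matching := hR
  sign v := if ∃ e ∈ R, v ∈ e then none else if v ∈ s then some false else some true
  sign_none v := by split_ifs <;> simp_all

@[simp]
theorem Config.ofMinus_red (R : Finset (Sym2 V)) (hR : IsMatching G R) (s : Finset V) :
    (Config.ofMinus R hR s).red = R := rfl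

theorem isMatching_empty : IsMatching G ∅ := ⟨by simp, by simp⟩

theorem isMatching_singleton {u v : V} (h : G.Adj u v) : IsMatching G {s(u, v)} :=
  ⟨by simpa using h, by simp +contextual⟩

variable [Fintype V]

noncomputable def minusSet (C : Config G) : Finset V :=
  Finset.univ.filter fun v => C.sign v = some false

theorem mem_minusSet {C : Config G} {v : V} : v ∈ minusSet C ↔ C.sign v = some false := by
  simp [minusSet]

theorem Qg_eq_card_minusSet (C : Config G) : Qg C = (minusSet C).card := rfl

theorem Config.notMem_minusSet {C : Config G} {e : Sym2 V} (he : e ∈ C.red) {v : V}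
    (hv : v ∈ e) : v ∉ minusSet C := by
  simp [mem_minusSet, C.sign_eq_none he hv]

theorem Config.sign_eq_ite {C : Config G} {v : V} (hv : ∀ e ∈ C.red, v ∉ e) :
    C.sign v = if v ∈ minusSet C then some false else some true := by
  have hne : C.sign v ≠ none := fun h => by
    obtain ⟨e, he, hve⟩ := (C.sign_none v).1 h
    exact hv e he hve
  rcases h : C.sign v with _ | _ | _ <;> simp_all [mem_minusSet]

theorem Config.eq_of_minusSet_eq {C C' : Config G} (hC : C.red = ∅) (hC' : C'.red = ∅)
    (h : minusSet C = minusSet C') : C = C' :=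
  Config.ext (hC.trans hC'.symm) <| funext fun v => by
    rw [C.sign_eq_ite (by simp [hC]), C'.sign_eq_ite (by simp [hC']), h]

theorem minusSet_ofMinus {R : Finset (Sym2 V)} (hR : IsMatching G R) {s : Finset V}
    (hs : ∀ v ∈ s, ∀ e ∈ R, v ∉ e) : minusSet (Config.ofMinus R hR s) = s := by
  ext v
  by_cases hv : v ∈ s
  · simpa [mem_minusSet, Config.ofMinus, hv] using hs v hv
  · simp [mem_minusSet, Config.ofMinus, hv]

abbrev Level (G : SimpleGraph V) (k n : ℤ) : Type :=
  {C : Config G // (Qg C : ℤ) = k ∧ (Eg C : ℤ) = n}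

theorem Level.bounds {k n : ℤ} (a : Level G k n) : 0 ≤ k ∧ k ≤ Fintype.card V := by
  obtain ⟨C, hQ, -⟩ := a
  have : (minusSet C).card ≤ Fintype.card V := Finset.card_le_univ _
  rw [Qg_eq_card_minusSet] at hQ
  omega

theorem Level.card_red {k n : ℤ} (a : Level G k n) : (a.1.red.card : ℤ) = n - k := by
  have hQ := a.2.1
  have hE := a.2.2
  rw [Eg] at hE
  push_cast at hE
  omega

theorem Level.red_eq_empty {k : ℤ} (a : Level G k k) : a.1.red = ∅ := by
  have := a.card_red
  exact Finset.card_eq_zero.1 (by omega)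

theorem Level.minusSet_injective (k : ℤ) :
    Function.Injective fun a : Level G k k => minusSet a.1 :=
  fun a b h => Subtype.ext (Config.eq_of_minusSet_eq a.red_eq_empty b.red_eq_empty h)

theorem DStep_iff {C C' : Config G} {e : Sym2 V} (hC : C.red = {e}) (hC' : C'.red = ∅) :
    DStep C C' ↔ ∃ w ∈ e, minusSet C' = insert w (minusSet C) := by
  have he : e ∈ C.red := by simp [hC]
  have hsign' : ∀ x, C'.sign x = if x ∈ minusSet C' then some false else some true :=
    fun x => C'.sign_eq_ite (by simp [hC'])
  have hsign : ∀ x ∉ e, C.sign x = if x ∈ minusSet C then some false else some true :=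
    fun x hx => C.sign_eq_ite (by simpa [hC] using hx)
  constructor
  · rintro ⟨e', he', -, hoff, a, b, rfl, ha, hb⟩
    obtain rfl : s(a, b) = e := by simpa [hC] using he'
    refine ⟨b, Sym2.mem_mk_right a b, Finset.ext fun x => ?_⟩
    by_cases hx : x ∈ s(a, b)
    · rcases Sym2.mem_iff.1 hx with rfl | rfl
      · have hab : x ≠ b := by rintro rfl; simp_all
        simp [mem_minusSet, ha, hab, C.notMem_minusSet he hx]
      · simp [mem_minusSet, hb]
    · have hxb : x ≠ b := fun h => hx (h ▸ Sym2.mem_mk_right a b)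
      simp [mem_minusSet, hoff x hx, hxb]
  · rintro ⟨w, hw, hmin⟩
    have hadj : G.Adj (Sym2.Mem.other hw) w := by
      rw [← SimpleGraph.mem_edgeSet, Sym2.eq_swap, Sym2.other_spec hw]
      exact C.matching.1 e he
    refine ⟨e, he, by simp [hC, hC'], fun x hx => ?_, Sym2.Mem.other hw, w,
      by rw [Sym2.eq_swap, Sym2.other_spec], ?_, ?_⟩
    · have hxw : x ≠ w := fun h => hx (h ▸ hw)
      simp only [hsign' x, hsign x hx, hmin, Finset.mem_insert, hxw, false_or]
    · rw [hsign', hmin, if_neg]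
      rw [Finset.mem_insert, not_or]
      exact ⟨hadj.ne, C.notMem_minusSet he (Sym2.other_mem hw)⟩
    · simp [hsign', hmin]

noncomputable def minusVec (G : SimpleGraph V) (k : ℤ) (s : Finset V) : SC G k k :=
  fun a => if minusSet a.1 = s then 1 else 0

theorem minusVec_minusSet {k : ℤ} (a : Level G k k) :
    minusVec G k (minusSet a.1) = Pi.single a 1 := by
  funext b
  simp [minusVec, Pi.single_apply, (Level.minusSet_injective k).eq_iff]

theorem minusVec_eq_zero {k : ℤ} {s : Finset V} (hs : (s.card : ℤ) ≠ k) : minusVec G k s = 0 := by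
  funext b
  have hb : ((minusSet b.1).card : ℤ) = k := b.2.1
  simp only [minusVec, Pi.zero_apply, ite_eq_right_iff]
  rintro rfl
  exact absurd hb hs

theorem sum_minusVec (k : ℤ) (s : Finset V) :
    ∑ a, minusVec G k s a = if (s.card : ℤ) = k then 1 else 0 := by
  split_ifs with hs
  · have hmin : minusSet (Config.ofMinus (G := G) ∅ isMatching_empty s) = s :=
      minusSet_ofMinus _ (by simp)
    let a : Level G k k := ⟨Config.ofMinus ∅ isMatching_empty s, by
      simp [Eg, Qg_eq_card_minusSet, hmin, hs]⟩
    rw [← hmin, show Config.ofMinus ∅ isMatching_empty s = a.1 from rfl, minusVec_minusSet]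
    simp
  · simp [minusVec_eq_zero hs]

theorem Dgr_single_of_red_eq {k' n' k : ℤ} (a : Level G k' n') {u v : V}
    (ha : a.1.red = {s(u, v)}) :
    Dgr G k' n' k k (Pi.single a 1) =
      minusVec G k (insert u (minusSet a.1)) + minusVec G k (insert v (minusSet a.1)) := by
  have he : s(u, v) ∈ a.1.red := by simp [ha]
  have huv : u ≠ v := (G.mem_edgeSet.1 (a.1.matching.1 _ he)).ne
  have hne : insert u (minusSet a.1) ≠ insert v (minusSet a.1) := fun h => by
    have : u ∈ insert v (minusSet a.1) := h ▸ Finset.mem_insert_self _ _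
    simp [huv, a.1.notMem_minusSet he (Sym2.mem_mk_left u v)] at this
  funext b
  simp only [Dgr, sumLin_single, DStep_iff ha (Level.red_eq_empty b), Sym2.mem_iff, Pi.add_apply,
    minusVec, exists_eq_or_imp, exists_eq_left]
  by_cases hbu : minusSet b.1 = insert u (minusSet a.1)
  · simp [hbu, hne]
  · by_cases hbv : minusSet b.1 = insert v (minusSet a.1) <;> simp [hbu, hbv, hne.symm]

theorem coordSum_comp_Dgr (k : ℤ) : coordSum _ ∘ₗ Dgr G (k - 1) k k k = 0 := by
  refine LinearMap.pi_ext' fun a => LinearMap.ext_ring ?_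
  obtain ⟨e, he⟩ := Finset.card_eq_one.1 (show a.1.red.card = 1 by have := Level.card_red a; omega)
  obtain ⟨u, v⟩ := e
  have hu : u ∉ minusSet a.1 := a.1.notMem_minusSet (by simp [he]) (Sym2.mem_mk_left u v)
  have hv : v ∉ minusSet a.1 := a.1.notMem_minusSet (by simp [he]) (Sym2.mem_mk_right u v)
  simp [coordSum_apply, Dgr_single_of_red_eq a he, Finset.sum_add_distrib, sum_minusVec,
    Finset.card_insert_of_notMem hu, Finset.card_insert_of_notMem hv,
    CharTwo.add_self_eq_zero]

theorem Dgr_zero_level_eq_zero (k k' n' : ℤ) : Dgr G k k k' n' = 0 := by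
  refine LinearMap.ext fun x => funext fun b => Finset.sum_eq_zero fun a _ => if_neg ?_
  rintro ⟨e, he, -⟩
  simp [Level.red_eq_empty a] at he

theorem minusVec_sub_mem_range {k : ℤ} {s t : Finset V} (h : Move G s t) :
    minusVec G k s - minusVec G k t ∈ LinearMap.range (Dgr G (k - 1) k k k) := by
  by_cases hs : (s.card : ℤ) = k
  · obtain ⟨u, v, huv, hu, hv, rfl⟩ := h
    set m := Config.ofMinus {s(u, v)} (isMatching_singleton huv) (s.erase u)
    have hmin : minusSet m = s.erase u := minusSet_ofMinus _ fun w hw => by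
      have : w ≠ v := fun h => hv (h ▸ Finset.mem_of_mem_erase hw)
      simp [Finset.ne_of_mem_erase hw, this]
    have hlevel : (Qg m : ℤ) = k - 1 ∧ (Eg m : ℤ) = k := by
      have := Finset.card_erase_add_one hu
      simp only [Eg, Qg_eq_card_minusSet, hmin, m, Config.ofMinus_red, Finset.card_singleton]
      omega
    refine ⟨Pi.single ⟨m, hlevel⟩ 1, ?_⟩
    rw [Dgr_single_of_red_eq ⟨m, hlevel⟩ rfl, hmin, Finset.insert_erase hu, ZModModule.sub_eq_add]
  · rw [minusVec_eq_zero hs, minusVec_eq_zero (h.card_eq ▸ hs), sub_zero]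
    exact Submodule.zero_mem _

theorem mem_range_Dgr_iff (hG : G.Preconnected) {k : ℤ} (x : SC G k k) :
    x ∈ LinearMap.range (Dgr G (k - 1) k k k) ↔ coordSum _ x = 0 := by
  constructor
  · rintro ⟨y, rfl⟩
    exact LinearMap.congr_fun (coordSum_comp_Dgr k) y
  · refine fun hx => mem_of_sum_eq_zero (fun a b => ?_) ((coordSum_apply x).symm.trans hx)
    rw [← minusVec_minusSet, ← minusVec_minusSet]
    refine sub_mem_of_reflTransGen _ (minusVec G k) (fun s t h => minusVec_sub_mem_range h)
      (reflTransGen_move_of_card_eq hG ?_)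
    have := a.2.1
    have := b.2.1
    rw [Qg_eq_card_minusSet] at *
    omega

/-- the zero-level Seifert cohomology: `dim SH^k(T,k) = 1` for
`0 ≤ k ≤ V` and `SH^k(T,k) = 0` otherwise. -/
theorem SHdim_zero_level (G : SimpleGraph V) (hG : G.IsTree) (k : ℤ) :
    SHdim G k k = if 0 ≤ k ∧ k ≤ (Fintype.card V : ℤ) then 1 else 0 := by
  split_ifs with hk
  · obtain ⟨s, -, hs⟩ := Finset.exists_subset_card_eq (s := (Finset.univ : Finset V))
      (n := k.toNat) (by rw [Finset.card_univ]; omega)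
    refine cohDim_eq_one (coordSum _) ⟨minusVec G k s, by simp [Dgr_zero_level_eq_zero], ?_⟩
      fun x _ => mem_range_Dgr_iff hG.connected.preconnected x
    rw [coordSum_apply, sum_minusVec, if_pos (by omega)]
    exact one_ne_zero
  · have : IsEmpty (Level G k k) := ⟨fun a => hk a.bounds⟩
    exact cohDim_eq_zero_of_subsingleton _ _

end Seifert
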